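/- Let 0 < r < 1 be fixed and define ρ : (0,1) → ℝ by ρ(b) = (1−r)·√(b/(1−b)) if b ≤ r, and ρ(b) = r·√((1−b)/b) if b > r. Then there exists a constant C > 0 (one may take C = min(√(1−r), √r)/2) such that for all b ∈ (0,1), ρ(r) − ρ(b) ≥ C·|b − r|. -/
import Mathlib


noncomputable def rho (r b : ℝ) : ℝ :=
  if b ≤ r then (1 - r) * Real.sqrt (b / (1 - b)) else r * Real.sqrt ((1 - b) / b)

theorem rho_gap_lower_bound (r : ℝ) (hr0 : 0 < r) (hr1 : r < 1) :
    ∃ C > 0, ∀ b : ℝ, 0 < b → b < 1 → rho r r - rho r b ≥ C * |b - r| := by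
  have hr1' : (0:ℝ) < 1 - r := by linarith
  have hs0 : (0:ℝ) < Real.sqrt (r * (1 - r)) := Real.sqrt_pos.2 (by nlinarith)
  set s := Real.sqrt (r * (1 - r)) with hs
  have hs2 : s ^ 2 = r * (1 - r) := Real.sq_sqrt (by nlinarith)
  clear_value s
  have hminpos : 0 < min r (1 - r) := lt_min hr0 hr1'
  refine ⟨min r (1 - r) / (2 * s), by positivity, ?_⟩
  intro b hb0 hb1
  have hb1' : (0:ℝ) < 1 - b := by linarith
  rcases le_or_gt b r with h | h
  · -- b ≤ r
    rw [abs_of_nonpos (by linarith)]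
    have hrr : rho r r = (1 - r) * Real.sqrt (r / (1 - r)) := by simp [rho]
    have hrb : rho r b = (1 - r) * Real.sqrt (b / (1 - b)) := by simp [rho, h]
    rw [hrr, hrb]
    set x := Real.sqrt (b / (1 - b)) with hxdef
    set y := Real.sqrt (r / (1 - r)) with hydef
    clear_value x y
    have hx0 : 0 ≤ x := hxdef ▸ Real.sqrt_nonneg _
    have hy0 : 0 < y := hydef ▸ Real.sqrt_pos.2 (div_pos hr0 hr1')
    have hx2 : x ^ 2 * (1 - b) = b := by
      rw [hxdef, Real.sq_sqrt (le_of_lt (div_pos hb0 hb1'))]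
      field_simp
    have hy2 : y ^ 2 * (1 - r) = r := by
      rw [hydef, Real.sq_sqrt (le_of_lt (div_pos hr0 hr1'))]
      field_simp
    have hxy : x ≤ y := by
      rw [hxdef, hydef]
      apply Real.sqrt_le_sqrt
      rw [div_le_div_iff₀ hb1' hr1']
      nlinarith
    have hsy : s = (1 - r) * y := by
      rw [hs, hydef, show r * (1 - r) = (1-r)^2 * (r / (1-r)) by field_simp]
      rw [Real.sqrt_mul (by positivity), Real.sqrt_sq (by linarith)]
    have hmin : min r (1 - r) ≤ 1 - r := min_le_right _ _
    rw [ge_iff_le, div_mul_eq_mul_div, div_le_iff₀ (by positivity)]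
    have k2 : (1 - r) * x ^ 2 ≤ b := by
      nlinarith [mul_nonneg (show (0:ℝ) ≤ r - b by linarith) (sq_nonneg x)]
    have key : r - b ≤ 2 * (1 - r) * y * (y - x) := by
      nlinarith [mul_nonneg hr1'.le (sq_nonneg (y - x))]
    have k3 : (1 - r) * (r - b) ≤ (1 - r) * (2 * (1 - r) * y * (y - x)) :=
      mul_le_mul_of_nonneg_left key hr1'.le
    have k4 : min r (1 - r) * (r - b) ≤ (1 - r) * (r - b) :=
      mul_le_mul_of_nonneg_right hmin (by linarith)
    rw [hsy]
    linarith [k3, k4]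
  · -- r < b
    rw [abs_of_nonneg (by linarith)]
    have hrr : rho r r = (1 - r) * Real.sqrt (r / (1 - r)) := by simp [rho]
    have hrb : rho r b = r * Real.sqrt ((1 - b) / b) := by simp [rho, not_le.2 h]
    rw [hrr, hrb]
    set x := Real.sqrt ((1 - b) / b) with hxdef
    set z := Real.sqrt ((1 - r) / r) with hzdef
    clear_value x z
    have hx0 : 0 ≤ x := hxdef ▸ Real.sqrt_nonneg _
    have hz0 : 0 < z := hzdef ▸ Real.sqrt_pos.2 (div_pos hr1' hr0)
    have hx2 : x ^ 2 * b = 1 - b := by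
      rw [hxdef, Real.sq_sqrt (le_of_lt (div_pos hb1' hb0))]
      field_simp
    have hz2 : z ^ 2 * r = 1 - r := by
      rw [hzdef, Real.sq_sqrt (le_of_lt (div_pos hr1' hr0))]
      field_simp
    have hxz : x ≤ z := by
      rw [hxdef, hzdef]
      apply Real.sqrt_le_sqrt
      rw [div_le_div_iff₀ hb0 hr0]
      nlinarith
    have hsz : s = r * z := by
      rw [hs, hzdef, show r * (1 - r) = r^2 * ((1-r) / r) by field_simp]
      rw [Real.sqrt_mul (by positivity), Real.sqrt_sq (by linarith)]
    have hrry : (1 - r) * Real.sqrt (r / (1 - r)) = r * z := by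
      rw [← hsz, hs, show r * (1 - r) = (1-r)^2 * (r / (1-r)) by field_simp]
      rw [Real.sqrt_mul (by positivity), Real.sqrt_sq (by linarith)]
    rw [hrry]
    have hmin : min r (1 - r) ≤ r := min_le_left _ _
    rw [ge_iff_le, div_mul_eq_mul_div, div_le_iff₀ (by positivity)]
    have k2 : r * x ^ 2 ≤ 1 - b := by
      nlinarith [mul_nonneg (show (0:ℝ) ≤ b - r by linarith) (sq_nonneg x)]
    have key : b - r ≤ 2 * r * z * (z - x) := by
      nlinarith [mul_nonneg hr0.le (sq_nonneg (z - x))]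
    have k3 : r * (b - r) ≤ r * (2 * r * z * (z - x)) :=
      mul_le_mul_of_nonneg_left key hr0.le
    have k4 : min r (1 - r) * (b - r) ≤ r * (b - r) :=
      mul_le_mul_of_nonneg_right hmin (by linarith)
    rw [hsz]
    linarith [k3, k4]
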